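/- Let f be a Schur-concave function on probability distributions on k elements, let p be a probability distribution on k elements with non-increasingly ordered entries, and let δ ≥ 0. Then for every probability distribution q with ‖q − p‖ ≤ δ one has f(p̄^(δ)) ≤ f(q) ≤ f(p̲^(δ)), where p̄^(δ) and p̲^(δ) are the steepest and flattest δ-approximations of p; that is, the smoothed maximum f̄^(δ)(p) = max_{‖q−p‖≤δ} f(q) equals f(p̲^(δ)) and the smoothed minimum f̲^(δ)(p) = min_{‖q−p‖≤δ} f(q) equals f(p̄^(δ)). -/

import Mathlib

open Finset

noncomputable section

/-- The ℓ¹ distance `‖a − b‖ = Σᵢ |aᵢ − bᵢ|` between two vectors in `ℝ^k`. -/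
def l1dist {k : ℕ} (a b : Fin k → ℝ) : ℝ := ∑ i, |a i - b i|

/-- A probability distribution on `k` elements: nonnegative entries summing to 1. -/
def IsProbDist {k : ℕ} (p : Fin k → ℝ) : Prop := (∀ i, 0 ≤ p i) ∧ ∑ i, p i = 1

/-- The vector `a` rearranged in non-increasing order, `a↓`. -/
def descSort {k : ℕ} (a : Fin k → ℝ) : Fin k → ℝ := fun i => a (Tuple.sort a i.rev)

/-- The sum of the first `l` entries of `a` (1-based indexing: entries `1,…,l`). -/
def psum {k : ℕ} (a : Fin k → ℝ) (l : ℕ) : ℝ :=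
  ∑ i ∈ univ.filter (fun i : Fin k => (i : ℕ) < l), a i

/-- The sum of the entries of `a` from position `l` to `k` (1-based indexing). -/
def tailSum {k : ℕ} (a : Fin k → ℝ) (l : ℕ) : ℝ :=
  ∑ i ∈ univ.filter (fun i : Fin k => l ≤ (i : ℕ) + 1), a i

/-- `a` majorizes `b` (`a ≻ b`): the total sums agree and all partial sums of the
non-increasing rearrangements satisfy `Σ_{i=1}^l a↓ᵢ ≥ Σ_{i=1}^l b↓ᵢ` for `l = 1,…,k`. -/
def Majorizes {k : ℕ} (a b : Fin k → ℝ) : Prop :=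
  (∑ i, a i = ∑ i, b i) ∧
  ∀ l : ℕ, 1 ≤ l → l ≤ k → psum (descSort b) l ≤ psum (descSort a) l

/-- The distribution `e₁ = (1,0,…,0)`. -/
def e1 (k : ℕ) : Fin k → ℝ := fun i => if (i : ℕ) = 0 then 1 else 0

/-- The uniform distribution `η = (1/k,…,1/k)`. -/
def unif (k : ℕ) : Fin k → ℝ := fun _ => (k : ℝ)⁻¹

/-- The unnormalised vector `r` in the construction of the steepest approximation:
`r₁ = p₁ + δ/2`, `rᵢ = pᵢ` otherwise. -/
def steepR {k : ℕ} (δ : ℝ) (p : Fin k → ℝ) : Fin k → ℝ :=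
  fun i => if (i : ℕ) = 0 then p i + δ / 2 else p i

/-- `lstar ∈ {1,…,k}` is the truncation index of the steepest `δ`-approximation of `p`:
`Σ_{i=1}^{l*} rᵢ ≤ 1 < Σ_{i=1}^{l*+1} rᵢ` (the second sum being meaningful for `l* < k`). -/
def IsTruncIdx {k : ℕ} (δ : ℝ) (p : Fin k → ℝ) (lstar : ℕ) : Prop :=
  1 ≤ lstar ∧ lstar ≤ k ∧ psum (steepR δ p) lstar ≤ 1 ∧
    (lstar < k → 1 < psum (steepR δ p) (lstar + 1))

/-- `pbar` is the steepest `δ`-approximation `p̄^(δ)` of `p` (assumed non-increasingly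
ordered): if `‖p − e₁‖ ≤ δ` then `pbar = e₁`; otherwise `pbar` agrees with `r` on the
first `l*` entries, has `1 − Σ_{i=1}^{l*} rᵢ` at position `l*+1`, and `0` afterwards. -/
def IsSteepest {k : ℕ} (δ : ℝ) (p pbar : Fin k → ℝ) : Prop :=
  (l1dist p (e1 k) ≤ δ ∧ pbar = e1 k) ∨
  (δ < l1dist p (e1 k) ∧ ∃ lstar : ℕ, IsTruncIdx δ p lstar ∧
    ∀ i : Fin k, pbar i =
      if (i : ℕ) < lstar then steepR δ p i
      else if (i : ℕ) = lstar then 1 - psum (steepR δ p) lstar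
      else 0)

/-- `ε(x) = Σ_{i : pᵢ ≥ x} (pᵢ − x)`. -/
def epsFn {k : ℕ} (p : Fin k → ℝ) (x : ℝ) : ℝ :=
  ∑ i ∈ univ.filter (fun i : Fin k => x ≤ p i), (p i - x)

/-- `γ(y) = Σ_{i : pᵢ ≤ y} (y − pᵢ)`. -/
def gammaFn {k : ℕ} (p : Fin k → ℝ) (y : ℝ) : ℝ :=
  ∑ i ∈ univ.filter (fun i : Fin k => p i ≤ y), (y - p i)

/-- `pflat` is the flattest `δ`-approximation of `p` built from the cutting level `x*` and
the filling level `y*`: `x*, y* ∈ [0,1]`, `ε(x*) = γ(y*) = δ/2`, and `pflat` equals `x*`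
where `pᵢ ≥ x*`, equals `y*` where `pᵢ ≤ y*`, and equals `pᵢ` otherwise. -/
def IsFlattestWith {k : ℕ} (δ : ℝ) (p pflat : Fin k → ℝ) (x y : ℝ) : Prop :=
  x ∈ Set.Icc (0 : ℝ) 1 ∧ y ∈ Set.Icc (0 : ℝ) 1 ∧
  epsFn p x = δ / 2 ∧ gammaFn p y = δ / 2 ∧
  ∀ i : Fin k, pflat i = if x ≤ p i then x else if p i ≤ y then y else p i

/-- `pflat` is the flattest `δ`-approximation `p̲^(δ)` of `p` (assumed non-increasingly
ordered): if `‖p − η‖ ≤ δ` then `pflat = η`; otherwise it is obtained by cutting at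
level `x*` and filling at level `y*`. -/
def IsFlattest {k : ℕ} (δ : ℝ) (p pflat : Fin k → ℝ) : Prop :=
  (l1dist p (unif k) ≤ δ ∧ pflat = unif k) ∨
  (δ < l1dist p (unif k) ∧ ∃ x y : ℝ, IsFlattestWith δ p pflat x y)

end
/-!
Write `P_l` and `Q_l` for the partial sums of the non-increasing rearrangements of `p` and `q`.
If `‖q - p‖ ≤ δ` and both are distributions, then `|Q_l - P_l| ≤ δ/2` for every `l`. The
steepest approximation has partial sums at least `min (P_l + δ/2) 1`, hence majorizes `q`.
The flattest one has partial sums `l x*` along the cut segment, `1 - (k - l) y*` along the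
filled one, and `P_l - δ/2` in between; since `l ↦ Q_l` is concave with `Q_0 = 0`, `Q_k = 1`,
the bound `Q_l ≥ P_l - δ/2` at the end of each segment propagates to the linear bound along it,
so `q` majorizes the flattest approximation. Schur-concavity of `f` concludes.
-/

section Majorization

variable {k : ℕ}

lemma card_filter_val_lt_of_le {l : ℕ} (hl : l ≤ k) :
    (univ.filter fun i : Fin k => (i : ℕ) < l).card = l := by
  rw [Fin.card_filter_val_lt, min_eq_right hl]

lemma filter_subset_filter_val_lt {i j : ℕ} (hij : i ≤ j) :
    univ.filter (fun n : Fin k => (n : ℕ) < i) ⊆ univ.filter (fun n : Fin k => (n : ℕ) < j) :=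
  monotone_filter_right _ fun _ _ hn => lt_of_lt_of_le hn hij

lemma psum_zero (a : Fin k → ℝ) : psum a 0 = 0 := by simp [psum]

lemma psum_of_le (a : Fin k → ℝ) {l : ℕ} (hl : k ≤ l) : psum a l = ∑ i, a i := by
  unfold psum
  rw [filter_true_of_mem fun i _ => i.2.trans_le hl]

lemma psum_congr {a b : Fin k → ℝ} {l : ℕ} (h : ∀ i : Fin k, (i : ℕ) < l → a i = b i) :
    psum a l = psum b l :=
  sum_congr rfl fun i hi => h i (mem_filter.1 hi).2

lemma psum_const (c : ℝ) {l : ℕ} (hl : l ≤ k) : psum (fun _ : Fin k => c) l = l * c := by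
  rw [psum, sum_const, card_filter_val_lt_of_le hl, nsmul_eq_mul]

lemma psum_sub_const (a : Fin k → ℝ) (c : ℝ) {l : ℕ} (hl : l ≤ k) :
    psum (fun i => a i - c) l = psum a l - l * c := by
  rw [← psum_const c hl, psum, psum, psum, sum_sub_distrib]

lemma psum_le_psum_of_nonneg {a : Fin k → ℝ} {i j : ℕ} (hij : i ≤ j)
    (h : ∀ n : Fin k, i ≤ n → (n : ℕ) < j → 0 ≤ a n) : psum a i ≤ psum a j :=
  sum_le_sum_of_subset_of_nonneg (filter_subset_filter_val_lt hij)
    fun n hn hn' => h n (by simpa using hn') (mem_filter.1 hn).2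

lemma psum_le_psum_of_nonpos {a : Fin k → ℝ} {i j : ℕ} (hij : i ≤ j)
    (h : ∀ n : Fin k, i ≤ n → (n : ℕ) < j → a n ≤ 0) : psum a j ≤ psum a i :=
  sum_le_sum_of_subset_of_nonpos' (filter_subset_filter_val_lt hij)
    fun n hn hn' => h n (by simpa using hn') (mem_filter.1 hn).2

lemma psum_eq_of_eq_zero {a : Fin k → ℝ} {i j : ℕ} (hij : i ≤ j)
    (h : ∀ n : Fin k, i ≤ n → (n : ℕ) < j → a n = 0) : psum a i = psum a j :=
  le_antisymm (psum_le_psum_of_nonneg hij fun n h₁ h₂ => (h n h₁ h₂).ge)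
    (psum_le_psum_of_nonpos hij fun n h₁ h₂ => (h n h₁ h₂).le)

lemma psum_succ (a : Fin k → ℝ) {m : ℕ} (hm : m < k) :
    psum a (m + 1) = psum a m + a ⟨m, hm⟩ := by
  have : univ.filter (fun i : Fin k => (i : ℕ) < m + 1) =
      insert ⟨m, hm⟩ (univ.filter fun i : Fin k => (i : ℕ) < m) := by
    ext i
    simp only [mem_filter, mem_univ, true_and, mem_insert, Fin.ext_iff]
    omega
  rw [psum, psum, this, sum_insert (by simp), add_comm]

lemma psum_le_sum {a : Fin k → ℝ} (ha : ∀ i, 0 ≤ a i) (l : ℕ) : psum a l ≤ ∑ i, a i := by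
  rcases le_total l k with hl | hl
  · rw [← psum_of_le a le_rfl]
    exact psum_le_psum_of_nonneg hl fun n _ _ => ha n
  · exact (psum_of_le a hl).le

lemma psum_le_mul {a : Fin k → ℝ} {c : ℝ} (ha : ∀ i, a i ≤ c) {l : ℕ} (hl : l ≤ k) :
    psum a l ≤ l * c := by
  have := psum_le_psum_of_nonpos (a := fun i => a i - c) (Nat.zero_le l) fun n _ _ => by
    linarith [ha n]
  rw [psum_sub_const a c hl, psum_sub_const a c (Nat.zero_le l |>.trans hl), psum_zero] at this
  simpa using this

lemma psum_le_sum_sub_mul {a : Fin k → ℝ} {c : ℝ} (ha : ∀ i, c ≤ a i) {l : ℕ} (hl : l ≤ k) :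
    psum a l ≤ ∑ i, a i - (k - l) * c := by
  have := psum_le_psum_of_nonneg (a := fun i => a i - c) hl fun n _ _ => by linarith [ha n]
  rw [psum_sub_const a c hl, psum_sub_const a c le_rfl, psum_of_le a le_rfl] at this
  linarith

/-- Concavity of `l ↦ psum a l`. -/
lemma psum_concave {a : Fin k → ℝ} (ha : Antitone a) {i j m : ℕ} (hij : i ≤ j) (hjm : j ≤ m)
    (hm : m ≤ k) :
    ((m : ℝ) - j) * psum a i + ((j : ℝ) - i) * psum a m ≤ ((m : ℝ) - i) * psum a j := by
  rcases hjm.eq_or_lt with rfl | hjm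
  · simp
  set c := a ⟨j, hjm.trans_le hm⟩
  have head : psum a i - i * c ≤ psum a j - j * c := by
    rw [← psum_sub_const a c (hij.trans (hjm.le.trans hm)),
      ← psum_sub_const a c (hjm.le.trans hm)]
    exact psum_le_psum_of_nonneg hij fun n _ hn => sub_nonneg.2 (ha (Fin.mk_le_mk.2 hn.le))
  have tail : psum a m - m * c ≤ psum a j - j * c := by
    rw [← psum_sub_const a c hm, ← psum_sub_const a c (hjm.le.trans hm)]
    exact psum_le_psum_of_nonpos hjm.le fun n hn _ => sub_nonpos.2 (ha (Fin.mk_le_mk.2 hn))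
  have hji : (0 : ℝ) ≤ j - i := sub_nonneg.2 (by exact_mod_cast hij)
  have hmj : (0 : ℝ) ≤ m - j := sub_nonneg.2 (by exact_mod_cast hjm.le)
  nlinarith [mul_le_mul_of_nonneg_left head hmj, mul_le_mul_of_nonneg_left tail hji]

/-- Exchange argument around `c = a (#S - 1)`: the entries of `S` beyond position `#S` are at
most `c`, the first `#S` positions missing from `S` carry entries at least `c`. -/
lemma sum_le_psum_card {a : Fin k → ℝ} (ha : Antitone a) (S : Finset (Fin k)) :
    ∑ i ∈ S, a i ≤ psum a S.card := by
  set l := S.card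
  have hl : l ≤ k := by simpa using card_le_univ S
  rcases Nat.eq_zero_or_pos l with hl0 | hl0
  · simp [l, card_eq_zero.1 hl0, psum_zero]
  set H := univ.filter fun i : Fin k => (i : ℕ) < l
  set c := a ⟨l - 1, by omega⟩
  have hS : ∑ i ∈ S, (a i - c) ≤ ∑ i ∈ S ∩ H, (a i - c) :=
    sum_le_sum_of_subset_of_nonpos' inter_subset_left fun i hiS hi => by
      have : l ≤ (i : ℕ) := by simpa [H, hiS] using hi
      exact sub_nonpos.2 (ha (Fin.mk_le_mk.2 (by omega)))
  have hH : ∑ i ∈ S ∩ H, (a i - c) ≤ ∑ i ∈ H, (a i - c) :=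
    sum_le_sum_of_subset_of_nonneg inter_subset_right fun i hi _ => by
      have : (i : ℕ) < l := by simpa [H] using hi
      exact sub_nonneg.2 (ha (Fin.mk_le_mk.2 (by omega)))
  have hc : ∑ i ∈ H, (a i - c) = psum a l - l * c := psum_sub_const a c hl
  rw [sum_sub_distrib, sum_const, nsmul_eq_mul] at hS
  linarith

lemma descSort_apply (a : Fin k → ℝ) (i : Fin k) :
    descSort a i = a ((Fin.revPerm.trans (Tuple.sort a)) i) := rfl

lemma descSort_antitone (a : Fin k → ℝ) : Antitone (descSort a) :=
  fun _ _ hij => Tuple.monotone_sort a (Fin.rev_le_rev.2 hij)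

lemma descSort_eq_self {a : Fin k → ℝ} (ha : Antitone a) : descSort a = a := by
  have h : a ∘ Fin.revPerm = a ∘ Tuple.sort a :=
    (Tuple.comp_sort_eq_comp_iff_monotone).2 fun _ _ hij => ha (Fin.rev_le_rev.2 hij)
  funext i
  simpa [descSort] using (congrFun h i.rev).symm

lemma sum_descSort (a : Fin k → ℝ) : ∑ i, descSort a i = ∑ i, a i :=
  Equiv.sum_comp (Fin.revPerm.trans (Tuple.sort a)) a

lemma sum_le_psum_descSort (a : Fin k → ℝ) (S : Finset (Fin k)) :
    ∑ i ∈ S, a i ≤ psum (descSort a) S.card := by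
  set σ := Fin.revPerm.trans (Tuple.sort a)
  have h : ∑ i ∈ S, a i = ∑ i ∈ S.map σ.symm.toEmbedding, descSort a i := by
    simp [descSort_apply, σ]
  rw [h, ← card_map σ.symm.toEmbedding]
  exact sum_le_psum_card (descSort_antitone a) _

lemma psum_le_psum_descSort (a : Fin k → ℝ) {l : ℕ} (hl : l ≤ k) :
    psum a l ≤ psum (descSort a) l := by
  simpa [card_filter_val_lt_of_le hl, psum] using
    sum_le_psum_descSort a (univ.filter fun i : Fin k => (i : ℕ) < l)

lemma exists_card_eq_psum_descSort (a : Fin k → ℝ) {l : ℕ} (hl : l ≤ k) :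
    ∃ S : Finset (Fin k), S.card = l ∧ psum (descSort a) l = ∑ i ∈ S, a i := by
  set σ := Fin.revPerm.trans (Tuple.sort a)
  refine ⟨(univ.filter fun i : Fin k => (i : ℕ) < l).map σ.toEmbedding, ?_, ?_⟩
  · rw [card_map, card_filter_val_lt_of_le hl]
  · rw [sum_map]
    rfl

lemma l1dist_comm (a b : Fin k → ℝ) : l1dist a b = l1dist b a := by
  simp only [l1dist, abs_sub_comm]

lemma l1dist_eq_two_mul_sum_max {a b : Fin k → ℝ} (hab : ∑ i, a i = ∑ i, b i) :
    l1dist a b = 2 * ∑ i, max (a i - b i) 0 := by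
  have h : ∀ t : ℝ, |t| = 2 * max t 0 - t := fun t => by
    rcases le_total t 0 with ht | ht
    · rw [abs_of_nonpos ht, max_eq_right ht]; ring
    · rw [abs_of_nonneg ht, max_eq_left ht]; ring
  simp only [l1dist, h, sum_sub_distrib, ← mul_sum, hab, sub_self, sub_zero]

lemma sum_sub_le_half_l1dist {a b : Fin k → ℝ} (hab : ∑ i, a i = ∑ i, b i)
    (S : Finset (Fin k)) : ∑ i ∈ S, (a i - b i) ≤ l1dist a b / 2 := by
  rw [l1dist_eq_two_mul_sum_max hab]
  calc ∑ i ∈ S, (a i - b i) ≤ ∑ i ∈ S, max (a i - b i) 0 :=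
        sum_le_sum fun i _ => le_max_left _ _
    _ ≤ ∑ i, max (a i - b i) 0 := sum_le_univ_sum_of_nonneg fun i => le_max_right _ _
    _ = 2 * (∑ i, max (a i - b i) 0) / 2 := by ring

lemma psum_descSort_le_add {a b : Fin k → ℝ} (hab : ∑ i, a i = ∑ i, b i) {l : ℕ}
    (hl : l ≤ k) : psum (descSort a) l ≤ psum (descSort b) l + l1dist a b / 2 := by
  obtain ⟨S, hS, ha⟩ := exists_card_eq_psum_descSort a hl
  have hb := sum_le_psum_descSort b S
  have hd := sum_sub_le_half_l1dist hab S
  rw [sum_sub_distrib, hS] at *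
  linarith

lemma epsFn_eq_sum_max (p : Fin k → ℝ) (x : ℝ) : epsFn p x = ∑ i, max (p i - x) 0 := by
  rw [epsFn, sum_filter]
  refine sum_congr rfl fun i _ => ?_
  split_ifs with h
  · exact (max_eq_left (sub_nonneg.2 h)).symm
  · exact (max_eq_right (by linarith [not_le.1 h])).symm

lemma gammaFn_eq_sum_max (p : Fin k → ℝ) (y : ℝ) : gammaFn p y = ∑ i, max (y - p i) 0 := by
  rw [gammaFn, sum_filter]
  refine sum_congr rfl fun i _ => ?_
  split_ifs with h
  · exact (max_eq_left (sub_nonneg.2 h)).symm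
  · exact (max_eq_right (by linarith [not_le.1 h])).symm

lemma epsFn_antitone (p : Fin k → ℝ) : Antitone (epsFn p) := fun x x' h => by
  simp only [epsFn_eq_sum_max]
  exact sum_le_sum fun i _ => max_le_max (by linarith) le_rfl

lemma gammaFn_monotone (p : Fin k → ℝ) : Monotone (gammaFn p) := fun y y' h => by
  simp only [gammaFn_eq_sum_max]
  exact sum_le_sum fun i _ => max_le_max (by linarith) le_rfl

lemma mul_le_psum_of_forall_le_head {p q : Fin k → ℝ} {x : ℝ} (hp : Antitone p)
    (hq : Antitone q) (hpq : ∀ m ≤ k, psum p m - epsFn p x ≤ psum q m) {l : ℕ} (hl : l ≤ k)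
    (hx : ∀ i : Fin k, (i : ℕ) < l → x ≤ p i) : l * x ≤ psum q l := by
  set S := univ.filter fun i : Fin k => x ≤ p i
  set A := S.card
  have hA : A ≤ k := by simpa using card_le_univ S
  have hlA : l ≤ A := by
    rw [← card_filter_val_lt_of_le hl]
    exact card_le_card fun i hi => mem_filter.2 ⟨mem_univ i, hx i (mem_filter.1 hi).2⟩
  have hqA : A * x ≤ psum q A := by
    have hε : epsFn p x = ∑ i ∈ S, p i - A * x := by
      rw [epsFn, sum_sub_distrib, sum_const, nsmul_eq_mul]
    linarith [sum_le_psum_card hp S, hpq A hA]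
  rcases Nat.eq_zero_or_pos A with hA0 | hA0
  · obtain rfl : l = 0 := by omega
    simp [psum_zero]
  have hconc := psum_concave hq (Nat.zero_le l) hlA hA
  simp only [psum_zero, Nat.cast_zero, mul_zero, zero_add, sub_zero] at hconc
  have hA0' : (0 : ℝ) < A := by exact_mod_cast hA0
  refine le_of_mul_le_mul_left ?_ hA0'
  have hl0 : (0 : ℝ) ≤ l := l.cast_nonneg
  nlinarith [mul_le_mul_of_nonneg_left hqA hl0]

lemma sum_sub_mul_le_psum_of_forall_tail_le {p q : Fin k → ℝ} {y : ℝ} (hp : Antitone p)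
    (hq : Antitone q) (hsum : ∑ i, q i = ∑ i, p i)
    (hpq : ∀ m ≤ k, psum p m - gammaFn p y ≤ psum q m) {l : ℕ} (hl : l ≤ k)
    (hy : ∀ i : Fin k, l ≤ (i : ℕ) → p i ≤ y) : ∑ i, p i - (k - l) * y ≤ psum q l := by
  set T := univ.filter fun i : Fin k => p i ≤ y
  set B := T.card
  have hB : B ≤ k := by simpa using card_le_univ T
  have hTc : Tᶜ.card = k - B := by rw [card_compl, Fintype.card_fin]
  have hBl : k - B ≤ l := by
    rw [← hTc, ← card_filter_val_lt_of_le hl]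
    refine card_le_card fun i hi => mem_filter.2 ⟨mem_univ i, ?_⟩
    by_contra h
    exact (mem_compl.1 hi) (mem_filter.2 ⟨mem_univ i, hy i (not_lt.1 h)⟩)
  have hqB : ∑ i, p i - B * y ≤ psum q (k - B) := by
    have hγ : gammaFn p y = B * y - ∑ i ∈ T, p i := by
      rw [gammaFn, sum_sub_distrib, sum_const, nsmul_eq_mul]
    have hcompl := sum_le_psum_card hp Tᶜ
    rw [hTc, ← sum_compl_add_sum T] at *
    linarith [hpq (k - B) (Nat.sub_le k B)]
  rcases Nat.eq_zero_or_pos B with hB0 | hB0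
  · obtain rfl : l = k := by omega
    simp [psum_of_le q le_rfl, hsum]
  have hconc := psum_concave hq hBl hl le_rfl
  rw [psum_of_le q le_rfl, hsum, Nat.cast_sub hB] at hconc
  have hB0' : (0 : ℝ) < B := by exact_mod_cast hB0
  have hkl : (0 : ℝ) ≤ k - l := sub_nonneg.2 (by exact_mod_cast hl)
  refine le_of_mul_le_mul_left ?_ hB0'
  nlinarith [mul_le_mul_of_nonneg_left hqB hkl]

lemma forall_le_head_or_forall_tail_le {p : Fin k → ℝ} (hp : Antitone p) (l : ℕ) (x : ℝ) :
    (∀ i : Fin k, (i : ℕ) < l → x ≤ p i) ∨ (∀ i : Fin k, l ≤ (i : ℕ) → p i ≤ x) := by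
  by_contra! h
  obtain ⟨⟨i, hi, hpi⟩, ⟨j, hj, hpj⟩⟩ := h
  linarith [hp (Fin.le_def.2 (by omega) : i ≤ j)]

lemma max_min_eq_sub_add {x y : ℝ} (hyx : y ≤ x) (t : ℝ) :
    max y (min x t) = t - max (t - x) 0 + max (y - t) 0 := by
  simp only [max_def, min_def]
  split_ifs <;> linarith

lemma sum_clamp {p : Fin k → ℝ} {x y : ℝ} (hyx : y ≤ x) :
    ∑ i, max y (min x (p i)) = ∑ i, p i - epsFn p x + gammaFn p y := by
  simp only [max_min_eq_sub_add hyx, sum_add_distrib, sum_sub_distrib, epsFn_eq_sum_max,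
    gammaFn_eq_sum_max]

lemma l1dist_clamp {p : Fin k → ℝ} {x y : ℝ} (hyx : y ≤ x)
    (hsum : ∑ i, max y (min x (p i)) = ∑ i, p i) :
    l1dist p (fun i => max y (min x (p i))) = 2 * epsFn p x := by
  rw [l1dist_eq_two_mul_sum_max hsum.symm, epsFn_eq_sum_max]
  congr 1
  refine sum_congr rfl fun i _ => ?_
  simp only [max_def, min_def]
  split_ifs <;> linarith

lemma psum_clamp_le {p q : Fin k → ℝ} {x y δ : ℝ} (hp : Antitone p) (hq : Antitone q)
    (hp1 : ∑ i, p i = 1) (hq1 : ∑ i, q i = 1) (hyx : y ≤ x) (hx : epsFn p x = δ / 2)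
    (hy : gammaFn p y = δ / 2) (hpq : ∀ m ≤ k, psum p m - δ / 2 ≤ psum q m) {l : ℕ}
    (hl : l ≤ k) : psum (fun i => max y (min x (p i))) l ≤ psum q l := by
  rcases forall_le_head_or_forall_tail_le hp l x with hcut | hbelow_x
  · calc psum (fun i => max y (min x (p i))) l ≤ l * x :=
          psum_le_mul (fun i => max_le hyx (min_le_left _ _)) hl
      _ ≤ psum q l := mul_le_psum_of_forall_le_head hp hq (by rwa [hx]) hl hcut
  rcases forall_le_head_or_forall_tail_le hp l y with habove_y | hfill
  · have hhead : psum (fun i => max y (min x (p i))) l =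
        psum p l - psum (fun i => max (p i - x) 0) l := by
      rw [psum, psum, psum, ← sum_sub_distrib]
      refine sum_congr rfl fun i hi => ?_
      rw [max_min_eq_sub_add hyx, max_eq_right (sub_nonpos.2 (habove_y i (mem_filter.1 hi).2))]
      ring
    have hcut : psum (fun i => max (p i - x) 0) l = epsFn p x := by
      rw [psum_eq_of_eq_zero hl fun n hn _ => max_eq_right (sub_nonpos.2 (hbelow_x n hn)),
        psum_of_le _ le_rfl, epsFn_eq_sum_max]
    rw [hhead, hcut, hx]
    exact hpq l hl
  · calc psum (fun i => max y (min x (p i))) l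
        ≤ ∑ i, max y (min x (p i)) - (k - l) * y :=
          psum_le_sum_sub_mul (fun i => le_max_left _ _) hl
      _ = ∑ i, p i - (k - l) * y := by rw [sum_clamp hyx, hx, hy]; ring
      _ ≤ psum q l := sum_sub_mul_le_psum_of_forall_tail_le hp hq (hq1.trans hp1.symm)
          (by rwa [hy]) hl hfill

lemma IsProbDist.pos {p : Fin k → ℝ} (hp : IsProbDist p) : 0 < k := by
  rcases Nat.eq_zero_or_pos k with rfl | hk
  · simpa using hp.2
  · exact hk

lemma psum_descSort_le_of_l1dist_le {p q : Fin k → ℝ} {δ : ℝ} (hp : Antitone p)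
    (hsum : ∑ i, q i = ∑ i, p i) (hqp : l1dist q p ≤ δ) {l : ℕ} (hl : l ≤ k) :
    psum (descSort q) l ≤ psum p l + δ / 2 := by
  have := psum_descSort_le_add hsum hl
  rw [descSort_eq_self hp] at this
  linarith

lemma le_psum_descSort_of_l1dist_le {p q : Fin k → ℝ} {δ : ℝ} (hp : Antitone p)
    (hsum : ∑ i, q i = ∑ i, p i) (hqp : l1dist q p ≤ δ) {l : ℕ} (hl : l ≤ k) :
    psum p l - δ / 2 ≤ psum (descSort q) l := by
  have := psum_descSort_le_add hsum.symm hl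
  rw [descSort_eq_self hp, l1dist_comm] at this
  linarith

lemma psum_unif_le {q : Fin k → ℝ} (hq : Antitone q) (hq1 : ∑ i, q i = 1) {l : ℕ}
    (hl : l ≤ k) : psum (unif k) l ≤ psum q l := by
  rcases Nat.eq_zero_or_pos k with rfl | hk
  · obtain rfl : l = 0 := by omega
    simp [psum_zero]
  have hconc := psum_concave hq (Nat.zero_le l) hl le_rfl
  simp only [psum_zero, psum_of_le q le_rfl, hq1, Nat.cast_zero, mul_zero, zero_add, sub_zero,
    mul_one] at hconc
  have hk' : (0 : ℝ) < k := by exact_mod_cast hk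
  unfold unif
  rw [psum_const _ hl, ← div_eq_mul_inv, div_le_iff₀' hk']
  exact hconc

lemma unif_isProbDist (hk : 0 < k) : IsProbDist (unif k) := by
  refine ⟨fun _ => inv_nonneg.2 k.cast_nonneg, ?_⟩
  unfold unif
  rw [sum_const, card_univ, Fintype.card_fin, nsmul_eq_mul,
    mul_inv_cancel₀ (by exact_mod_cast hk.ne')]

/-- In fact `y < 1/k < x`: `ε(1/k) = γ(1/k)` is half the distance from `p` to the uniform
distribution, which exceeds `δ`. -/
lemma IsFlattestWith.le {p pflat : Fin k → ℝ} {δ x y : ℝ} (hp : IsProbDist p)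
    (hδ : δ < l1dist p (unif k)) (h : IsFlattestWith δ p pflat x y) : y ≤ x := by
  obtain ⟨-, -, hx, hy, -⟩ := h
  have hsum : ∑ i, p i = ∑ i, unif k i := by rw [hp.2, (unif_isProbDist hp.pos).2]
  have hε : l1dist p (unif k) = 2 * epsFn p (k : ℝ)⁻¹ := by
    rw [l1dist_eq_two_mul_sum_max hsum, epsFn_eq_sum_max]
    rfl
  have hγ : l1dist p (unif k) = 2 * gammaFn p (k : ℝ)⁻¹ := by
    rw [l1dist_comm, l1dist_eq_two_mul_sum_max hsum.symm, gammaFn_eq_sum_max]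
    rfl
  have hkx : (k : ℝ)⁻¹ ≤ x := by
    by_contra! hxk
    linarith [epsFn_antitone p hxk.le]
  have hyk : y ≤ (k : ℝ)⁻¹ := by
    by_contra! hky
    linarith [gammaFn_monotone p hky.le]
  exact hyk.trans hkx

lemma IsFlattestWith.eq_clamp {p pflat : Fin k → ℝ} {δ x y : ℝ}
    (h : IsFlattestWith δ p pflat x y) (hyx : y ≤ x) :
    pflat = fun i => max y (min x (p i)) := by
  funext i
  rw [h.2.2.2.2 i]
  simp only [max_def, min_def]
  split_ifs <;> first | rfl | linarith

lemma IsFlattest.eq_unif_or_eq_clamp {p pflat : Fin k → ℝ} {δ : ℝ} (hp : IsProbDist p)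
    (h : IsFlattest δ p pflat) :
    (l1dist p (unif k) ≤ δ ∧ pflat = unif k) ∨
      ∃ x y, y ≤ x ∧ 0 ≤ y ∧ epsFn p x = δ / 2 ∧ gammaFn p y = δ / 2 ∧
        pflat = fun i => max y (min x (p i)) := by
  refine h.imp id fun ⟨hδ, x, y, hfl⟩ => ⟨x, y, hfl.le hp hδ, hfl.2.1.1, hfl.2.2.1, hfl.2.2.2.1,
    hfl.eq_clamp (hfl.le hp hδ)⟩

lemma IsFlattest.isProbDist_and_l1dist_le {p pflat : Fin k → ℝ} {δ : ℝ} (hp : IsProbDist p)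
    (h : IsFlattest δ p pflat) : IsProbDist pflat ∧ l1dist p pflat ≤ δ := by
  rcases h.eq_unif_or_eq_clamp hp with ⟨hδ, rfl⟩ | ⟨x, y, hyx, hy0, hx, hy, rfl⟩
  · exact ⟨unif_isProbDist hp.pos, hδ⟩
  have hsum : ∑ i, max y (min x (p i)) = ∑ i, p i := by rw [sum_clamp hyx, hx, hy]; ring
  refine ⟨⟨fun i => hy0.trans (le_max_left _ _), hsum.trans hp.2⟩, ?_⟩
  rw [l1dist_clamp hyx hsum, hx]
  linarith

lemma IsFlattest.majorizes {p pflat q : Fin k → ℝ} {δ : ℝ} (hp : IsProbDist p)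
    (hord : Antitone p) (h : IsFlattest δ p pflat) (hq : IsProbDist q) (hqp : l1dist q p ≤ δ) :
    Majorizes q pflat := by
  refine ⟨by rw [hq.2, (h.isProbDist_and_l1dist_le hp).1.2], fun l _ hl => ?_⟩
  have hq' : ∑ i, descSort q i = 1 := (sum_descSort q).trans hq.2
  rcases h.eq_unif_or_eq_clamp hp with ⟨-, rfl⟩ | ⟨x, y, hyx, -, hx, hy, rfl⟩
  · rw [descSort_eq_self fun _ _ _ => le_rfl]
    exact psum_unif_le (descSort_antitone q) hq' hl
  · rw [descSort_eq_self fun i j hij => max_le_max le_rfl (min_le_min le_rfl (hord hij))]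
    refine psum_clamp_le hord (descSort_antitone q) hp.2 hq' hyx hx hy (fun m hm => ?_) hl
    linarith [le_psum_descSort_of_l1dist_le hord (hq.2.trans hp.2.symm) hqp hm]

lemma psum_e1 (hk : 0 < k) {l : ℕ} (hl : 1 ≤ l) : psum (e1 k) l = 1 := by
  rw [← psum_eq_of_eq_zero (a := e1 k) hl fun n hn _ => if_neg (by omega),
    ← zero_add 1, psum_succ _ hk, psum_zero]
  simp [e1]

lemma e1_isProbDist (hk : 0 < k) : IsProbDist (e1 k) :=
  ⟨fun i => by unfold e1; split_ifs <;> norm_num,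
    (psum_of_le _ le_rfl).symm.trans (psum_e1 hk hk)⟩

lemma steepR_eq_add (δ : ℝ) (p : Fin k → ℝ) :
    steepR δ p = fun i => p i + δ / 2 * e1 k i := by
  funext i
  unfold steepR e1
  split_ifs <;> ring

lemma psum_steepR (hk : 0 < k) (δ : ℝ) (p : Fin k → ℝ) {l : ℕ} (hl : 1 ≤ l) :
    psum (steepR δ p) l = psum p l + δ / 2 := by
  rw [steepR_eq_add, psum, sum_add_distrib, ← mul_sum, ← psum, ← psum, psum_e1 hk hl, mul_one]

lemma sum_max_steepR_sub (hk : 0 < k) {δ : ℝ} (hδ : 0 ≤ δ) (p : Fin k → ℝ) :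
    ∑ i, max (steepR δ p i - p i) 0 = δ / 2 := by
  have h : ∀ i, max (steepR δ p i - p i) 0 = δ / 2 * e1 k i := fun i => by
    rw [steepR_eq_add, add_sub_cancel_left]
    exact max_eq_left (mul_nonneg (by linarith) ((e1_isProbDist hk).1 i))
  rw [sum_congr rfl fun i _ => h i, ← mul_sum, (e1_isProbDist hk).2, mul_one]

section Truncation

variable {δ : ℝ} {p pbar : Fin k → ℝ} {lstar : ℕ}
  (hbar : ∀ i : Fin k, pbar i =
    if (i : ℕ) < lstar then steepR δ p i
    else if (i : ℕ) = lstar then 1 - psum (steepR δ p) lstar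
    else 0)
include hbar

lemma truncation_le_steepR (hp0 : ∀ i, 0 ≤ p i) (htr : IsTruncIdx δ p lstar) (i : Fin k) :
    pbar i ≤ steepR δ p i := by
  obtain ⟨h1, -, -, hS2⟩ := htr
  have hr : ∀ i : Fin k, (i : ℕ) ≠ 0 → steepR δ p i = p i := fun i hi => if_neg hi
  rw [hbar i]
  split_ifs with hlt heq
  · exact le_rfl
  · have hlk : lstar < k := heq ▸ i.2
    have := hS2 hlk
    rw [psum_succ _ hlk] at this
    obtain rfl : i = ⟨lstar, hlk⟩ := Fin.ext heq
    linarith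
  · rw [hr i (by omega)]
    exact hp0 i

lemma truncation_nonneg (hp0 : ∀ i, 0 ≤ p i) (hδ : 0 ≤ δ) (htr : IsTruncIdx δ p lstar)
    (i : Fin k) : 0 ≤ pbar i := by
  rw [hbar i]
  split_ifs
  · unfold steepR
    split_ifs <;> linarith [hp0 i]
  · linarith [htr.2.2.1]
  · exact le_rfl

lemma psum_truncation_of_le {l : ℕ} (hl : l ≤ lstar) : psum pbar l = psum (steepR δ p) l :=
  psum_congr fun i hi => by rw [hbar i, if_pos (by omega)]

lemma psum_truncation_of_lt {l : ℕ} (hlt : lstar < l) (hl : l ≤ k) : psum pbar l = 1 := by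
  have hlk : lstar < k := by omega
  have hzero : ∀ n : Fin k, lstar + 1 ≤ n → (n : ℕ) < l → pbar n = 0 := fun n hn _ => by
    rw [hbar n, if_neg (by omega), if_neg (by omega)]
  rw [← psum_eq_of_eq_zero hlt hzero, psum_succ _ hlk, psum_truncation_of_le hbar le_rfl, hbar,
    if_neg (lt_irrefl _), if_pos rfl]
  ring

lemma sum_truncation (hp1 : ∑ i, p i = 1) (hδ : 0 ≤ δ) (htr : IsTruncIdx δ p lstar) :
    ∑ i, pbar i = 1 := by
  obtain ⟨h1, hlk, hS1, -⟩ := htr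
  rw [← psum_of_le pbar le_rfl]
  rcases hlk.lt_or_eq with hlt | rfl
  · exact psum_truncation_of_lt hbar hlt le_rfl
  · -- here `1 + δ / 2 ≤ 1` forces `δ = 0`
    rw [psum_truncation_of_le hbar le_rfl]
    rw [psum_steepR (by omega) δ p h1, psum_of_le p le_rfl, hp1] at hS1 ⊢
    linarith

end Truncation

lemma IsSteepest.isProbDist_and_l1dist_le {δ : ℝ} {p pbar : Fin k → ℝ} (hp : IsProbDist p)
    (hδ : 0 ≤ δ) (h : IsSteepest δ p pbar) : IsProbDist pbar ∧ l1dist p pbar ≤ δ := by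
  rcases h with ⟨hd, rfl⟩ | ⟨-, lstar, htr, hbar⟩
  · exact ⟨e1_isProbDist hp.pos, hd⟩
  have hsum := sum_truncation hbar hp.2 hδ htr
  refine ⟨⟨truncation_nonneg hbar hp.1 hδ htr, hsum⟩, ?_⟩
  rw [l1dist_comm, l1dist_eq_two_mul_sum_max (hsum.trans hp.2.symm)]
  calc 2 * ∑ i, max (pbar i - p i) 0 ≤ 2 * ∑ i, max (steepR δ p i - p i) 0 := by
        gcongr with i
        exact truncation_le_steepR hbar hp.1 htr i
    _ = δ := by rw [sum_max_steepR_sub hp.pos hδ]; ring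

lemma IsSteepest.min_le_psum {δ : ℝ} {p pbar : Fin k → ℝ} (hk : 0 < k)
    (h : IsSteepest δ p pbar) {l : ℕ} (hl1 : 1 ≤ l) (hl : l ≤ k) :
    min (psum p l + δ / 2) 1 ≤ psum pbar l := by
  rcases h with ⟨-, rfl⟩ | ⟨-, lstar, -, hbar⟩
  · exact (min_le_right _ _).trans (psum_e1 hk hl1).ge
  rcases le_or_gt l lstar with hll | hll
  · rw [psum_truncation_of_le hbar hll, psum_steepR hk δ p hl1]
    exact min_le_left _ _
  · rw [psum_truncation_of_lt hbar hll hl]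
    exact min_le_right _ _

lemma IsSteepest.majorizes {δ : ℝ} {p pbar q : Fin k → ℝ} (hp : IsProbDist p)
    (hord : Antitone p) (hδ : 0 ≤ δ) (h : IsSteepest δ p pbar) (hq : IsProbDist q)
    (hqp : l1dist q p ≤ δ) : Majorizes pbar q := by
  refine ⟨by rw [hq.2, (h.isProbDist_and_l1dist_le hp hδ).1.2], fun l hl1 hl => ?_⟩
  calc psum (descSort q) l ≤ min (psum p l + δ / 2) 1 := by
        refine le_min ?_ ?_
        · exact psum_descSort_le_of_l1dist_le hord (hq.2.trans hp.2.symm) hqp hl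
        · exact (psum_le_sum (fun i => hq.1 _) l).trans ((sum_descSort q).trans hq.2).le
    _ ≤ psum pbar l := h.min_le_psum hp.pos hl1 hl
    _ ≤ psum (descSort pbar) l := psum_le_psum_descSort pbar hl

end Majorization

/-- for a Schur-concave `f`, the smoothed maximum is attained at the
flattest `δ`-approximation and the smoothed minimum at the steepest one:
`f(p̄^(δ)) ≤ f(q) ≤ f(p̲^(δ))` for every `q` with `‖q − p‖ ≤ δ`. -/
theorem schurConcave_smooth_max_min {k : ℕ} (f : (Fin k → ℝ) → ℝ)
    (hf : ∀ a b : Fin k → ℝ, IsProbDist a → IsProbDist b → Majorizes a b → f a ≤ f b)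
    (δ : ℝ) (hδ : 0 ≤ δ)
    (p : Fin k → ℝ) (hp : IsProbDist p) (hord : Antitone p)
    (pbar pflat : Fin k → ℝ)
    (hpbar : IsSteepest δ p pbar) (hpflat : IsFlattest δ p pflat) :
    (IsProbDist pbar ∧ l1dist p pbar ≤ δ) ∧
    (IsProbDist pflat ∧ l1dist p pflat ≤ δ) ∧
      ∀ q : Fin k → ℝ, IsProbDist q → l1dist q p ≤ δ →
        f pbar ≤ f q ∧ f q ≤ f pflat := by
  have hbar := hpbar.isProbDist_and_l1dist_le hp hδ
  have hflat := hpflat.isProbDist_and_l1dist_le hp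
  refine ⟨hbar, hflat, fun q hq hqp => ⟨?_, ?_⟩⟩
  · exact hf _ _ hbar.1 hq (hpbar.majorizes hp hord hδ hq hqp)
  · exact hf _ _ hq hflat.1 (hpflat.majorizes hp hord hq hqp)
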